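/- Let (Ψ, d) be a pseudometric space, F : Ψ → ℝ a function satisfying |F(a) − F(b)| ≤ d(a,b) for all a, b ∈ Ψ, and (Ω, ℱ, P) a probability space. Let L ∈ ℕ, ψ₁, …, ψ_L ∈ Ψ, and for each l let Z_l : Ω → ℝ be a square-integrable random variable with E[Z_l] = F(ψ_l) and Var(Z_l) ≤ V for a constant V ≥ 0. Let 0 < τ < 1 and ε > 0. Let ψ̃ : Ω → Ψ and κ : Ω → {1,…,L} be maps such that d(ψ̃(ω), ψ_{κ(ω)}) ≤ τε for every ω ∈ Ω, let Z̃ : Ω → ℝ be a random variable such that W(ω) := |Z_{κ(ω)}(ω) − Z̃(ω)| is measurable with E[W] ≤ τε, and assume ω ↦ F(ψ̃(ω)) is measurable. Then, with probability at least 1 − τ − L·V/ε², one has |F(ψ̃) − Z̃| < (2 + τ)ε. -/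

import Mathlib

open MeasureTheory ProbabilityTheory

/-!
Call `ω` bad if `|Z_l(ω) - F(ψ_l)| ≥ ε` for some net point `l` or `W(ω) ≥ ε`. By Chebyshev and a
union bound over the net, the first event has probability at most `L V / ε²`; by Markov, the second
has probability at most `τ`. On a good `ω`, the triangle inequality through `F(ψ_κ)` and `Z_κ`,
together with `|F(ψ̃) - F(ψ_κ)| ≤ d(ψ̃, ψ_κ) ≤ τ ε`, gives `|F(ψ̃) - Z̃| < (2 + τ) ε`.
-/

namespace MeasureTheory

variable {Ω : Type*} [MeasurableSpace Ω] {μ : Measure Ω}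

theorem meas_ge_le_ofReal_of_lintegral_le {f : Ω → ℝ} (hf : AEMeasurable f μ) {τ ε : ℝ}
    (hε : 0 < ε) (hint : ∫⁻ ω, ENNReal.ofReal (f ω) ∂μ ≤ ENNReal.ofReal (τ * ε)) :
    μ {ω | ε ≤ f ω} ≤ ENNReal.ofReal τ := by
  have hset : {ω | ε ≤ f ω} = {ω | ENNReal.ofReal ε ≤ ENNReal.ofReal (f ω)} := by
    ext ω
    simp [ENNReal.ofReal_le_ofReal_iff', hε.not_ge]
  calc μ {ω | ε ≤ f ω}
      ≤ (∫⁻ ω, ENNReal.ofReal (f ω) ∂μ) / ENNReal.ofReal ε := by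
        rw [hset]
        exact meas_ge_le_lintegral_div hf.ennreal_ofReal (by simpa using hε) ENNReal.ofReal_ne_top
    _ ≤ ENNReal.ofReal (τ * ε) / ENNReal.ofReal ε := by gcongr
    _ = ENNReal.ofReal τ := by rw [← ENNReal.ofReal_div_of_pos hε, mul_div_cancel_right₀ _ hε.ne']

theorem ofReal_one_sub_le_prob_of_prob_compl_le [IsProbabilityMeasure μ] {s : Set Ω} {a : ℝ}
    (ha : 0 ≤ a) (hs : μ sᶜ ≤ ENNReal.ofReal a) : ENNReal.ofReal (1 - a) ≤ μ s := by
  have hcover : 1 ≤ μ s + μ sᶜ := by simpa using measure_univ_le_add_compl (μ := μ) s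
  calc ENNReal.ofReal (1 - a) = 1 - ENNReal.ofReal a := by
        rw [ENNReal.ofReal_sub _ ha, ENNReal.ofReal_one]
    _ ≤ 1 - μ sᶜ := tsub_le_tsub_left hs 1
    _ ≤ μ s := tsub_le_iff_right.mpr hcover

end MeasureTheory

namespace ProbabilityTheory

variable {Ω ι : Type*} [MeasurableSpace Ω] {μ : Measure Ω} [IsFiniteMeasure μ]

theorem meas_ge_le_of_variance_le {X : Ω → ℝ} (hX : MemLp X 2 μ) {V ε : ℝ}
    (hvar : variance X μ ≤ V) (hε : 0 < ε) :
    μ {ω | ε ≤ |X ω - μ[X]|} ≤ ENNReal.ofReal (V / ε ^ 2) :=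
  (meas_ge_le_variance_div_sq hX hε).trans (ENNReal.ofReal_le_ofReal (by gcongr))

theorem meas_exists_ge_le_of_variance_le [Fintype ι] {X : ι → Ω → ℝ} (hX : ∀ i, MemLp (X i) 2 μ)
    {V ε : ℝ} (hvar : ∀ i, variance (X i) μ ≤ V) (hε : 0 < ε) :
    μ {ω | ∃ i, ε ≤ |X i ω - μ[X i]|} ≤ ENNReal.ofReal (Fintype.card ι * V / ε ^ 2) := by
  calc μ {ω | ∃ i, ε ≤ |X i ω - μ[X i]|}
      = μ (⋃ i, {ω | ε ≤ |X i ω - μ[X i]|}) := by rw [Set.ofPred_exists]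
    _ ≤ ∑ i, μ {ω | ε ≤ |X i ω - μ[X i]|} := measure_iUnion_fintype_le _ _
    _ ≤ ∑ _i : ι, ENNReal.ofReal (V / ε ^ 2) :=
        Finset.sum_le_sum fun i _ => meas_ge_le_of_variance_le (hX i) (hvar i) hε
    _ = ENNReal.ofReal (Fintype.card ι * V / ε ^ 2) := by
        rw [Finset.sum_const, Finset.card_univ, nsmul_eq_mul, ← ENNReal.ofReal_natCast,
          ← ENNReal.ofReal_mul (Nat.cast_nonneg _), mul_div_assoc]

end ProbabilityTheory

theorem abs_sub_lt_of_lipschitz_of_abs_sub_lt {Ψ : Type*} [PseudoMetricSpace Ψ] {F : Ψ → ℝ}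
    (hF : ∀ a b : Ψ, |F a - F b| ≤ dist a b) {a b : Ψ} {y z : ℝ} {δ ε : ℝ} (hab : dist a b ≤ δ)
    (hby : |F b - y| < ε) (hyz : |y - z| < ε) : |F a - z| < δ + 2 * ε :=
  calc |F a - z| ≤ |F a - F b| + (|F b - y| + |y - z|) :=
        (abs_sub_le _ _ _).trans (add_le_add_right (abs_sub_le _ _ _) _)
    _ < δ + (ε + ε) := add_lt_add_of_le_of_lt ((hF a b).trans hab) (add_lt_add hby hyz)
    _ = δ + 2 * ε := by ring

theorem stmt0_general {Ψ : Type*} [PseudoMetricSpace Ψ]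
    {Ω : Type*} [MeasurableSpace Ω] (μ : Measure Ω) [IsProbabilityMeasure μ]
    (F : Ψ → ℝ) (hF : ∀ a b : Ψ, |F a - F b| ≤ dist a b)
    (L : ℕ) (ψ : Fin L → Ψ) (Z : Fin L → Ω → ℝ)
    (hZsq : ∀ l, MemLp (Z l) 2 μ)
    (hmean : ∀ l, ∫ ω, Z l ω ∂μ = F (ψ l))
    (V : ℝ) (hV : 0 ≤ V) (hvar : ∀ l, variance (Z l) μ ≤ V)
    (τ ε : ℝ) (hτ0 : 0 < τ) (hε : 0 < ε)
    (ψt : Ω → Ψ) (κ : Ω → Fin L)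
    (hnear : ∀ ω, dist (ψt ω) (ψ (κ ω)) ≤ τ * ε)
    (Zt : Ω → ℝ)
    (hWmeas : Measurable fun ω => |Z (κ ω) ω - Zt ω|)
    (hW : ∫⁻ ω, ENNReal.ofReal |Z (κ ω) ω - Zt ω| ∂μ ≤ ENNReal.ofReal (τ * ε)) :
    ENNReal.ofReal (1 - τ - (L : ℝ) * V / ε ^ 2) ≤
      μ {ω | |F (ψt ω) - Zt ω| < (2 + τ) * ε} := by
  have hnet := meas_exists_ge_le_of_variance_le hZsq hvar hε
  simp only [Fintype.card_fin, hmean] at hnet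
  have hmarkov := meas_ge_le_ofReal_of_lintegral_le hWmeas.aemeasurable hε hW
  have hbad : {ω | |F (ψt ω) - Zt ω| < (2 + τ) * ε}ᶜ ⊆
      {ω | ε ≤ |Z (κ ω) ω - Zt ω|} ∪ {ω | ∃ l, ε ≤ |Z l ω - F (ψ l)|} := by
    intro ω hω
    by_contra! hgood
    simp only [Set.mem_union, Set.mem_ofPred_eq, not_or, not_exists, not_le] at hgood
    have hclose := abs_sub_lt_of_lipschitz_of_abs_sub_lt hF (hnear ω)
      (by rw [abs_sub_comm]; exact hgood.2 (κ ω)) hgood.1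
    exact hω (hclose.trans_eq (by ring))
  have hnonneg : 0 ≤ (L : ℝ) * V / ε ^ 2 := by positivity
  rw [sub_sub]
  refine ofReal_one_sub_le_prob_of_prob_compl_le (by positivity) ?_
  calc μ {ω | |F (ψt ω) - Zt ω| < (2 + τ) * ε}ᶜ
      ≤ ENNReal.ofReal τ + ENNReal.ofReal ((L : ℝ) * V / ε ^ 2) :=
        (measure_mono hbad).trans ((measure_union_le _ _).trans (add_le_add hmarkov hnet))
    _ = ENNReal.ofReal (τ + (L : ℝ) * V / ε ^ 2) := (ENNReal.ofReal_add hτ0.le hnonneg).symm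

/-- Abstract form of Theorem 1: union bound over a finite net, Chebyshev, Markov,
and the Lipschitz property of `F` with respect to the pseudometric. -/
theorem stmt0 {Ψ : Type*} [PseudoMetricSpace Ψ]
    {Ω : Type*} [MeasurableSpace Ω] (μ : Measure Ω) [IsProbabilityMeasure μ]
    (F : Ψ → ℝ) (hF : ∀ a b : Ψ, |F a - F b| ≤ dist a b)
    (L : ℕ) (ψ : Fin L → Ψ) (Z : Fin L → Ω → ℝ)
    (hZsq : ∀ l, MemLp (Z l) 2 μ)
    (hmean : ∀ l, ∫ ω, Z l ω ∂μ = F (ψ l))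
    (V : ℝ) (hV : 0 ≤ V) (hvar : ∀ l, variance (Z l) μ ≤ V)
    (τ ε : ℝ) (hτ0 : 0 < τ) (hτ1 : τ < 1) (hε : 0 < ε)
    (ψt : Ω → Ψ) (κ : Ω → Fin L)
    (hnear : ∀ ω, dist (ψt ω) (ψ (κ ω)) ≤ τ * ε)
    (Zt : Ω → ℝ)
    (hWmeas : Measurable fun ω => |Z (κ ω) ω - Zt ω|)
    (hW : ∫⁻ ω, ENNReal.ofReal |Z (κ ω) ω - Zt ω| ∂μ ≤ ENNReal.ofReal (τ * ε))
    (hFmeas : Measurable fun ω => F (ψt ω)) :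
    ENNReal.ofReal (1 - τ - (L : ℝ) * V / ε ^ 2) ≤
      μ {ω | |F (ψt ω) - Zt ω| < (2 + τ) * ε} :=
  stmt0_general μ F hF L ψ Z hZsq hmean V hV hvar τ ε hτ0 hε ψt κ hnear Zt hWmeas hW
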